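/- arXiv:1202.2650 — 4 statements merged into one kernel-verified Lean document; each statement's English description precedes it below -/
import Mathlib

section
/- If a set family F on a set X has VC dimension at most d (no subset of X of size d+1 is shattered by F), then the dual VC dimension (co-dimension) of F is strictly less than 2^(d+1); i.e., there do not exist sets S_1, ..., S_n in F with n = 2^(d+1) such that for every subset u of {1,...,n} there is a point b_u in X with b_u ∈ S_i if and only if i ∈ u. -/
/-- `A` is shattered by the family `F`. -/
def ShatteredBy {X : Type*} (F : Set (Set X)) (A : Finset X) : Prop :=
  ∀ A' ⊆ A, ∃ S ∈ F, ∀ x ∈ A, (x ∈ S ↔ x ∈ A')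

/-! The sets `S_1, …, S_{2^(d+1)}` can be indexed by the subsets `T` of `{0, …, d}`. Dual
shattering provides, for each `j ≤ d`, a point `b_j` lying in exactly the sets `S_T` with
`j ∈ T`. These `d + 1` points are distinct, and `S_T` cuts out `{b_j | j ∈ T}` from them, so they
form a shattered set of size `d + 1`. -/

open Function

def DualShatters {X ι : Type*} (S : ι → Set X) : Prop :=
  ∀ u : Set ι, ∃ b : X, ∀ i, b ∈ S i ↔ i ∈ u

namespace DualShatters

variable {X ι κ α : Type*}

theorem comp {S : ι → Set X} (hS : DualShatters S) {f : κ → ι} (hf : Injective f) :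
    DualShatters (S ∘ f) := fun u ↦ by
  obtain ⟨b, hb⟩ := hS (f '' u)
  exact ⟨b, fun k ↦ (hb (f k)).trans hf.mem_set_image⟩

theorem exists_points {S : Set α → Set X} (hS : DualShatters S) :
    ∃ b : α → X, ∀ j T, b j ∈ S T ↔ j ∈ T := by
  choose b hb using fun j : α ↦ hS {T | j ∈ T}
  exact ⟨b, hb⟩

end DualShatters

section PointsOfSubsets

variable {X α : Type*} {S : Set α → Set X} {b : α → X}

theorem injective_of_mem_iff (hb : ∀ j T, b j ∈ S T ↔ j ∈ T) : Injective b := by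
  intro j k hjk
  have hk : b k ∈ S {j} := hjk ▸ (hb j {j}).2 rfl
  exact ((hb k {j}).1 hk).symm

theorem shatteredBy_image_of_mem_iff [DecidableEq X] {F : Set (Set X)} (hSF : ∀ T, S T ∈ F)
    (hb : ∀ j T, b j ∈ S T ↔ j ∈ T) (s : Finset α) : ShatteredBy F (s.image b) := by
  intro A' _
  refine ⟨S {j | b j ∈ A'}, hSF _, ?_⟩
  simp only [Finset.mem_image]
  rintro _ ⟨j, -, rfl⟩
  exact hb j _

end PointsOfSubsets

theorem exists_shatteredBy_card_of_dualShatters {X α : Type*} [Fintype α] {F : Set (Set X)}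
    {S : Set α → Set X} (hSF : ∀ T, S T ∈ F) (hS : DualShatters S) :
    ∃ A : Finset X, A.card = Fintype.card α ∧ ShatteredBy F A := by
  classical
  obtain ⟨b, hb⟩ := hS.exists_points
  exact ⟨Finset.univ.image b, Finset.card_image_of_injective _ (injective_of_mem_iff hb),
    shatteredBy_image_of_mem_iff hSF hb _⟩

/-- If no subset of size `d+1` is shattered by `F`, then there is no dual shattering
witness of length `2^(d+1)`: the dual VC dimension is `< 2^(d+1)`. -/
theorem dualVC_lt_two_pow {X : Type*} (F : Set (Set X)) (d : ℕ)
    (h : ∀ A : Finset X, A.card = d + 1 → ¬ ShatteredBy F A) :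
    ¬ ∃ S : Fin (2 ^ (d + 1)) → Set X, (∀ i, S i ∈ F) ∧
      ∀ u : Set (Fin (2 ^ (d + 1))), ∃ b : X, ∀ i, b ∈ S i ↔ i ∈ u := by
  rintro ⟨S, hSF, hS⟩
  let e : Set (Fin (d + 1)) ≃ Fin (2 ^ (d + 1)) :=
    Fintype.equivFinOfCardEq (by simp [Fintype.card_set])
  obtain ⟨A, hA, hshatter⟩ :=
    exists_shatteredBy_card_of_dualShatters (fun T ↦ hSF (e T)) (DualShatters.comp hS e.injective)
  exact h A (by simpa using hA) hshatter
end

section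
/- (Sauer–Shelah) If a family F of subsets of a finite set A of size m has VC dimension at most k, then the number of distinct traces {S ∩ A : S ∈ F} is at most the sum over i from 0 to k of binomial(m, i); in particular it is at most (m+1)^k. -/
/-!
The traces of `F` on `A` form a family `𝒜` of subsets of `A`, and a subset of `A` is shattered
by `F` exactly when it is shattered by `𝒜`, so `vcDim 𝒜 ≤ k`. Pajor's form of the Sauer–Shelah
lemma says that `𝒜` has at most as many members as it shatters, and every shattered set is a
subset of `A` of size at most `k`. Finally `∑_{i ≤ k} C(m, i) ≤ (m + 1)^k` by induction on `k`,
using `C(m, k + 1) ≤ m^(k + 1)`.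
-/

open Finset

namespace Nat

theorem sum_range_choose_le_succ_pow (m k : ℕ) :
    ∑ i ∈ range (k + 1), m.choose i ≤ (m + 1) ^ k := by
  induction k with
  | zero => simp
  | succ k ih =>
    have hchoose : m.choose (k + 1) ≤ m * (m + 1) ^ k :=
      calc m.choose (k + 1) ≤ m ^ (k + 1) := choose_le_pow m (k + 1)
        _ = m * m ^ k := by ring
        _ ≤ m * (m + 1) ^ k := by gcongr; omega
    calc ∑ i ∈ range (k + 1 + 1), m.choose i
        = ∑ i ∈ range (k + 1), m.choose i + m.choose (k + 1) := sum_range_succ _ _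
      _ ≤ (m + 1) ^ k + m * (m + 1) ^ k := add_le_add ih hchoose
      _ = (m + 1) ^ (k + 1) := by ring

end Nat

namespace Finset

variable {α : Type*} [DecidableEq α] {𝒜 : Finset (Finset α)} {A s : Finset α} {k : ℕ}

theorem vcDim_le_of_forall_card_eq_not_shatters (h : ∀ s, #s = k + 1 → ¬ 𝒜.Shatters s) :
    𝒜.vcDim ≤ k := by
  refine Finset.sup_le fun s hs => ?_
  by_contra! hks
  obtain ⟨t, hts, htk⟩ := exists_subset_card_eq (s := s) (n := k + 1) hks
  exact h t htk ((mem_shatterer.1 hs).mono_right hts)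

theorem Shatters.subset_of_forall_subset (hs : 𝒜.Shatters s) (h𝒜 : ∀ t ∈ 𝒜, t ⊆ A) :
    s ⊆ A := by
  obtain ⟨t, ht, hst⟩ := hs.exists_superset
  exact hst.trans (h𝒜 t ht)

theorem card_shatterer_le_sum_choose_of_forall_subset (h𝒜 : ∀ t ∈ 𝒜, t ⊆ A) :
    #𝒜.shatterer ≤ ∑ i ∈ Iic 𝒜.vcDim, (#A).choose i := by
  simp_rw [← card_powersetCard]
  refine (card_le_card fun s hs => mem_biUnion.2 ⟨#s, ?_⟩).trans card_biUnion_le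
  have hs := mem_shatterer.1 hs
  exact ⟨mem_Iic.2 hs.card_le_vcDim,
    mem_powersetCard.2 ⟨hs.subset_of_forall_subset h𝒜, rfl⟩⟩

theorem card_le_sum_choose_of_vcDim_le (h𝒜 : ∀ t ∈ 𝒜, t ⊆ A) (hk : 𝒜.vcDim ≤ k) :
    #𝒜 ≤ ∑ i ∈ range (k + 1), (#A).choose i :=
  calc #𝒜 ≤ #𝒜.shatterer := card_le_card_shatterer 𝒜
    _ ≤ ∑ i ∈ Iic 𝒜.vcDim, (#A).choose i := card_shatterer_le_sum_choose_of_forall_subset h𝒜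
    _ ≤ ∑ i ∈ range (k + 1), (#A).choose i :=
      sum_le_sum_of_subset fun i hi => mem_range.2 (by have := mem_Iic.1 hi; omega)

end Finset

section Trace

variable {X : Type*} (F : Set (Set X)) (A : Finset X)

open Classical in
noncomputable def traceFinset : Finset (Finset X) :=
  {s ∈ A.powerset | ∃ S ∈ F, (s : Set X) = S ∩ A}

variable {F A}

theorem mem_traceFinset {s : Finset X} :
    s ∈ traceFinset F A ↔ s ⊆ A ∧ ∃ S ∈ F, (s : Set X) = S ∩ A := by
  classical
  rw [traceFinset, mem_filter, mem_powerset]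

theorem subset_of_mem_traceFinset {s : Finset X} (hs : s ∈ traceFinset F A) : s ⊆ A :=
  (mem_traceFinset.1 hs).1

theorem setOf_inter_eq_image_traceFinset :
    {t : Set X | ∃ S ∈ F, t = S ∩ A} = (↑) '' (traceFinset F A : Set (Finset X)) := by
  classical
  ext t
  constructor
  · rintro ⟨S, hS, rfl⟩
    refine ⟨A.filter (· ∈ S), mem_traceFinset.2 ⟨filter_subset _ _, S, hS, ?_⟩, ?_⟩ <;>
      · ext x; simp [and_comm]
  · rintro ⟨s, hs, rfl⟩
    exact (mem_traceFinset.1 hs).2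

theorem ncard_setOf_inter_eq_card_traceFinset :
    {t : Set X | ∃ S ∈ F, t = S ∩ A}.ncard = #(traceFinset F A) := by
  rw [setOf_inter_eq_image_traceFinset, Set.ncard_image_of_injective _ coe_injective,
    Set.ncard_coe_finset]

theorem Finset.Shatters.forall_subset_exists_mem_of_traceFinset [DecidableEq X] {B : Finset X}
    (hB : (traceFinset F A).Shatters B) :
    ∀ B' ⊆ B, ∃ S ∈ F, ∀ x ∈ B, (x ∈ S ↔ x ∈ B') := by
  intro B' hB'
  obtain ⟨u, hu, rfl⟩ := hB hB'
  obtain ⟨-, S, hS, huS⟩ := mem_traceFinset.1 hu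
  refine ⟨S, hS, fun x hx => ?_⟩
  have hxA : x ∈ A := hB.subset_of_forall_subset (fun _ => subset_of_mem_traceFinset) hx
  have hxu : x ∈ u ↔ x ∈ S ∩ (A : Set X) := by rw [← huS, mem_coe]
  simp [hx, hxu, hxA]

end Trace

/-- Sauer–Shelah: if a family `F` of subsets of a finite set `A` of size `m` has VC
dimension at most `k` (no subset of size `k+1` is shattered), then the number of traces
`{S ∩ A : S ∈ F}` is at most `∑_{i ≤ k} C(m, i)`, and in particular at most `(m+1)^k`. -/
theorem sauer_shelah {X : Type*} (F : Set (Set X)) (A : Finset X) (k : ℕ)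
    (h : ∀ B : Finset X, B ⊆ A → B.card = k + 1 →
      ¬ (∀ B' ⊆ B, ∃ S ∈ F, ∀ x ∈ B, (x ∈ S ↔ x ∈ B'))) :
    {t : Set X | ∃ S ∈ F, t = S ∩ (A : Set X)}.ncard ≤
        ∑ i ∈ Finset.range (k + 1), (A.card).choose i ∧
      {t : Set X | ∃ S ∈ F, t = S ∩ (A : Set X)}.ncard ≤ (A.card + 1) ^ k := by
  classical
  have hsub : ∀ s ∈ traceFinset F A, s ⊆ A := fun _ => subset_of_mem_traceFinset
  have hvc : (traceFinset F A).vcDim ≤ k :=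
    Finset.vcDim_le_of_forall_card_eq_not_shatters fun B hBk hB =>
      h B (hB.subset_of_forall_subset hsub) hBk hB.forall_subset_exists_mem_of_traceFinset
  have hcard := Finset.card_le_sum_choose_of_vcDim_le hsub hvc
  rw [ncard_setOf_inter_eq_card_traceFinset]
  exact ⟨hcard, hcard.trans (Nat.sum_range_choose_le_succ_pow _ _)⟩
end

section
/- A family F of subsets of X has finite VC dimension if and only if it has finite dual VC dimension (co-dimension). -/
/-!
Call a family of sets `s : ι → Set β` Boolean independent when every pattern `u ⊆ ι` is realized
by a point. If `s` is Boolean independent and `ι` is at least as large as `Set κ`, choose a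
surjection `g : ι → Set κ` and, for each `j : κ`, a point `b j` realizing the pattern
`{i | j ∈ g i}`; then the dual family `j ↦ {i | b j ∈ s i}` is Boolean independent on `κ`.
So `2 ^ m` sets of `F` realizing all patterns yield `m` points shattered by `F`, and `2 ^ m`
points shattered by `F` yield `m` sets of `F` realizing all patterns.
-/

open Function

def BooleanIndependent {ι β : Type*} (s : ι → Set β) : Prop :=
  ∀ u : Set ι, ∃ b, ∀ i, b ∈ s i ↔ i ∈ u

def Shatters {X : Type*} (F : Set (Set X)) (A : Finset X) : Prop :=
  ∀ A' ⊆ A, ∃ S ∈ F, ∀ x ∈ A, (x ∈ S ↔ x ∈ A')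

namespace BooleanIndependent

variable {ι κ β : Type*} {s : ι → Set β}

theorem injective (hs : BooleanIndependent s) : Injective s := by
  intro i i' hii'
  obtain ⟨b, hb⟩ := hs {i}
  have hbi' : b ∈ s i' := hii' ▸ (hb i).2 rfl
  exact ((hb i').1 hbi').symm

theorem exists_dual_of_surjective (hs : BooleanIndependent s) {g : ι → Set κ}
    (hg : Surjective g) : ∃ b : κ → β, BooleanIndependent fun j => {i | b j ∈ s i} := by
  choose b hb using fun j => hs {i | j ∈ g i}
  refine ⟨b, fun v => ?_⟩
  obtain ⟨i, rfl⟩ := hg v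
  exact ⟨i, fun j => hb j i⟩

theorem exists_dual_fin [Fintype ι] (hs : BooleanIndependent s) {m : ℕ}
    (hm : 2 ^ m ≤ Fintype.card ι) :
    ∃ b : Fin m → β, BooleanIndependent fun j => {i | b j ∈ s i} := by
  obtain ⟨f⟩ : Nonempty (Set (Fin m) ↪ ι) :=
    Embedding.nonempty_of_card_le (by simpa using hm)
  exact hs.exists_dual_of_surjective (invFun_surjective f.injective)

end BooleanIndependent

section

variable {X : Type*} {F : Set (Set X)}

theorem BooleanIndependent.exists_shatters {ι : Type*} [Fintype ι] {S : ι → Set X}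
    (hSF : ∀ i, S i ∈ F) (hS : BooleanIndependent S) {m : ℕ} (hm : 2 ^ m ≤ Fintype.card ι) :
    ∃ A : Finset X, A.card = m ∧ Shatters F A := by
  classical
  obtain ⟨b, hb⟩ := hS.exists_dual_fin hm
  have hb_inj : Injective b := fun j j' h => hb.injective (by simp only [h])
  refine ⟨Finset.univ.image b, by simp [Finset.card_image_of_injective _ hb_inj], ?_⟩
  intro A' _
  obtain ⟨i, hi⟩ := hb {j | b j ∈ A'}
  refine ⟨S i, hSF i, ?_⟩
  simp only [Finset.mem_image, Finset.mem_univ, true_and, forall_exists_index,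
    forall_apply_eq_imp_iff]
  exact hi

theorem Shatters.exists_booleanIndependent {A : Finset X} (hA : Shatters F A) {m : ℕ}
    (hm : 2 ^ m ≤ A.card) :
    ∃ T : Fin m → Set X, (∀ j, T j ∈ F) ∧ BooleanIndependent T := by
  classical
  have hpoints : BooleanIndependent fun x : A => {S : F | (x : X) ∈ (S : Set X)} := by
    intro u
    obtain ⟨S, hSF, hS⟩ := hA (A.filter fun x => ∃ hx : x ∈ A, ⟨x, hx⟩ ∈ u)
      (Finset.filter_subset _ _)
    refine ⟨⟨S, hSF⟩, fun x => ?_⟩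
    simpa using hS x x.2
  obtain ⟨T, hT⟩ := hpoints.exists_dual_fin (m := m) (by simpa using hm)
  refine ⟨fun j => T j, fun j => (T j).2, fun v => ?_⟩
  obtain ⟨x, hx⟩ := hT v
  exact ⟨x, hx⟩

end

/-- A family has finite VC dimension iff it has finite dual VC dimension. -/
theorem finite_VC_iff_finite_dual_VC {X : Type*} (F : Set (Set X)) :
    (∃ d : ℕ, ∀ A : Finset X,
        (∀ A' ⊆ A, ∃ S ∈ F, ∀ x ∈ A, (x ∈ S ↔ x ∈ A')) → A.card ≤ d) ↔
    (∃ k : ℕ, ∀ n : ℕ, ∀ S : Fin n → Set X, (∀ i, S i ∈ F) →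
        (∀ u : Set (Fin n), ∃ b : X, ∀ i, b ∈ S i ↔ i ∈ u) → n ≤ k) := by
  constructor
  · rintro ⟨d, hd⟩
    refine ⟨2 ^ (d + 1), fun n S hSF hS => ?_⟩
    by_contra! hn
    obtain ⟨A, hAcard, hA⟩ := BooleanIndependent.exists_shatters hSF hS (m := d + 1)
      (by simpa using hn.le)
    have := hd A hA
    omega
  · rintro ⟨k, hk⟩
    refine ⟨2 ^ (k + 1), fun A hA => ?_⟩
    by_contra! hA_card
    obtain ⟨T, hTF, hT⟩ := Shatters.exists_booleanIndependent hA (m := k + 1) hA_card.le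
    have := hk _ T hTF hT
    omega
end

section
/- Let G be an arbitrary countable graph on vertex set V. Then there exists a family of pairwise disjoint nonempty open intervals (with rational endpoints) {(a_e, b_e) : e ∈ E(G)} in ℚ, indexed by the edges of G, together with an assignment of two distinct dense subsets to the vertices, such that the edge relation of G is coded: concretely, there is an injection v ↦ D_v from V to a set of pairwise disjoint dense subsets of ℚ, and for each edge e = {u, w} a choice of points a_e ∈ D_u, b_e ∈ D_w with the intervals (a_e, b_e) pairwise disjoint. -/
/-!
Give the vertex numbered `n` the set of rationals of `2`-adic valuation `n`. These sets are
disjoint, being fibres of one map, and dense: the numbers `m * 2 ^ n / L` with `m` and `L` odd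
have valuation `n`, and taking `L` large makes them as close together as we like. Then number the
edges and put the interval of the `k`-th edge inside `(k, k + 1)`, with its left endpoint in
`(k, k + 1/2)` and its right endpoint in `(k + 1/2, k + 1)`.
-/

open Set Function

theorem exists_odd_btwn {α : Type*} [Field α] [LinearOrder α] [IsStrictOrderedRing α]
    [FloorRing α] {x y : α} (h : x + 2 < y) : ∃ m : ℤ, Odd m ∧ x < m ∧ (m : α) < y := by
  refine ⟨2 * ⌊(x + 1) / 2⌋ + 1, odd_two_mul_add_one _, ?_, ?_⟩ <;> push_cast
  · linarith [Int.lt_floor_add_one ((x + 1) / 2)]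
  · linarith [Int.floor_le ((x + 1) / 2)]

theorem padicValRat_two_of_odd {m : ℤ} (hm : Odd m) : padicValRat 2 m = 0 := by
  simp [padicValRat.of_int, Int.odd_iff.1 hm]

theorem dense_setOf_padicValRat_two_eq (k : ℤ) : Dense {q : ℚ | padicValRat 2 q = k} := by
  refine dense_of_exists_between fun x y hxy => ?_
  have hc : (0 : ℚ) < 2 ^ k := by positivity
  obtain ⟨L, hLodd, hL, -⟩ :=
    exists_odd_btwn (x := 2 * 2 ^ k / (y - x)) (y := 2 * 2 ^ k / (y - x) + 3) (by linarith)
  have hL0 : (0 : ℚ) < L := lt_trans (by have := sub_pos.2 hxy; positivity) hL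
  have hgap : x * L / 2 ^ k + 2 < y * L / 2 ^ k := by
    rw [div_lt_iff₀ (sub_pos.2 hxy)] at hL
    rw [← lt_sub_iff_add_lt', ← sub_div, lt_div_iff₀ hc]
    linarith
  obtain ⟨m, hmodd, hxm, hmy⟩ := exists_odd_btwn hgap
  have hm0 : (m : ℚ) ≠ 0 := Int.cast_ne_zero.2 (by rintro rfl; exact Int.not_odd_zero hmodd)
  refine ⟨m * 2 ^ k / L, ?_, ?_, ?_⟩
  · rw [mem_ofPred_eq, padicValRat.div (mul_ne_zero hm0 hc.ne') hL0.ne',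
      padicValRat.mul hm0 hc.ne', padicValRat_two_of_odd hmodd, padicValRat_two_of_odd hLodd,
      padicValRat.zpow, show padicValRat 2 2 = 1 from padicValRat.self one_lt_two]
    ring
  · rwa [lt_div_iff₀ hL0, ← div_lt_iff₀ hc]
  · rwa [div_lt_iff₀ hL0, ← lt_div_iff₀ hc]

theorem exists_pairwise_disjoint_Ioo_of_dense {α E : Type*} [Field α] [LinearOrder α]
    [IsStrictOrderedRing α] [TopologicalSpace α] [OrderTopology α] [Countable E]
    {A B : E → Set α} (hA : ∀ e, Dense (A e)) (hB : ∀ e, Dense (B e)) :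
    ∃ lo hi : E → α, (∀ e, lo e < hi e) ∧ (∀ e, lo e ∈ A e ∧ hi e ∈ B e) ∧
      Pairwise fun e e' => Disjoint (Ioo (lo e) (hi e)) (Ioo (lo e') (hi e')) := by
  obtain ⟨g, hg⟩ := exists_injective_nat E
  choose lo hlo hlo_mem using fun e =>
    (hA e).exists_between (show (g e : α) < g e + 1 / 2 by linarith)
  choose hi hhi hhi_mem using fun e =>
    (hB e).exists_between (show (g e : α) + 1 / 2 < g e + 1 by linarith)
  have hsub : ∀ e, Ioo (lo e) (hi e) ⊆ Ioo ((g e : ℤ) : α) ((g e : ℤ) + 1) := fun e => by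
    push_cast
    exact Ioo_subset_Ioo (hlo_mem e).1.le (hhi_mem e).2.le
  refine ⟨lo, hi, fun e => (hlo_mem e).2.trans (hhi_mem e).1, fun e => ⟨hlo e, hhi e⟩,
    fun e e' hne => ?_⟩
  exact (pairwise_disjoint_Ioo_intCast α (by exact_mod_cast hg.ne hne)).mono (hsub e) (hsub e')

/-- Any countable graph can be coded by pairwise disjoint open rational intervals: there
are pairwise disjoint dense subsets `D v ⊆ ℚ` indexed injectively by the vertices, and
for each edge `e = {u, w}` a choice of endpoints `lo e ∈ D u`, `hi e ∈ D w` so that the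
nonempty open intervals `(lo e, hi e)` are pairwise disjoint. -/
theorem countable_graph_coded_by_disjoint_intervals
    {V : Type} [Countable V] (G : SimpleGraph V) :
    ∃ D : V → Set ℚ,
      (∀ v, ∀ a b : ℚ, a < b → ∃ q ∈ D v, a < q ∧ q < b) ∧
      Function.Injective D ∧
      (Pairwise fun u w => Disjoint (D u) (D w)) ∧
      ∃ lo hi : G.edgeSet → ℚ,
        (∀ e, lo e < hi e) ∧
        (∀ e : G.edgeSet, ∃ u w : V, (e : Sym2 V) = s(u, w) ∧ lo e ∈ D u ∧ hi e ∈ D w) ∧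
        Pairwise fun e e' : G.edgeSet =>
          Disjoint (Set.Ioo (lo e) (hi e)) (Set.Ioo (lo e') (hi e')) := by
  obtain ⟨f, hf⟩ := exists_injective_nat V
  let D : V → Set ℚ := fun v => {q | padicValRat 2 q = f v}
  have hdense : ∀ v, Dense (D v) := fun v => dense_setOf_padicValRat_two_eq _
  have hdisj : Pairwise fun u w => Disjoint (D u) (D w) := fun u w huw =>
    disjoint_left.2 fun q hu hw => hf.ne huw (by exact_mod_cast hu.symm.trans hw)
  have hinj : Injective D := fun u w h => by_contra fun huw =>
    (hdense w).nonempty.ne_empty <| disjoint_self.1 <| Disjoint.mono_left h.ge (hdisj huw)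
  obtain ⟨lo, hi, hlt, hmem, hIoo⟩ := exists_pairwise_disjoint_Ioo_of_dense
    (fun e : G.edgeSet => hdense (e : Sym2 V).out.1) (fun e => hdense (e : Sym2 V).out.2)
  exact ⟨D, fun v => dense_iff_exists_between.1 (hdense v), hinj, hdisj, lo, hi, hlt,
    fun e => ⟨_, _, (Quot.out_eq _).symm, hmem e⟩, hIoo⟩
end
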